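/- arXiv:2007.05084 — 2 statements merged into one kernel-verified Lean document; each statement's English description precedes it below -/
import Mathlib

section
/- (Theorem 1, lower bound.) Let f_W be an L-layer ReLU network with weight matrices W_1, …, W_L, let D and D_edge be finite disjoint sets of inputs, and for each x ∈ D_edge let ε(x) be a perturbation vector. Fix a layer l and for an input z write z^{(l−1)} for its (l−1)-th layer activation under W. Suppose W'_l is any matrix satisfying W'_l x^{(l−1)} = W_l x^{(l−1)} for all x ∈ D and W'_l x^{(l−1)} = W_l (x + ε(x))^{(l−1)} for all x ∈ D_edge. Then for every x ∈ D_edge and x' ∈ D with x^{(l−1)} ≠ x'^{(l−1)}, the operator norm of W_l − W'_l is at least ‖W_l((x + ε(x))^{(l−1)} − x^{(l−1)})‖ / ‖x^{(l−1)} − x'^{(l−1)}‖. -/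
open Matrix

/-- The ReLU function `σ(t) = max(t, 0)`. -/
def relu (t : ℝ) : ℝ := max t 0

/-- Layer activations of a ReLU network with layer dimensions `d` and weight
matrices `W` (the `(l+1)`-st layer has matrix `W l : ℝ^{d (l+1) × d l}`):
`x^{(0)} = x` and `x^{(l+1)} = σ(W_{l+1} x^{(l)})` componentwise. -/
def layerAct (d : ℕ → ℕ) (W : ∀ l : ℕ, Matrix (Fin (d (l + 1))) (Fin (d l)) ℝ) :
    (l : ℕ) → (Fin (d 0) → ℝ) → (Fin (d l) → ℝ)
  | 0, x => x
  | l + 1, x => fun i => relu (((W l).mulVec (layerAct d W l x)) i)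

/-- The Euclidean norm of a real vector. -/
noncomputable def euclNorm {ι : Type*} [Fintype ι] (v : ι → ℝ) : ℝ :=
  Real.sqrt (∑ i, (v i) ^ 2)

/-- The operator norm of a real matrix with respect to Euclidean norms. -/
noncomputable def matOpNorm {m n : Type*} [Fintype m] [Fintype n] [DecidableEq n]
    (M : Matrix m n ℝ) : ℝ :=
  ‖LinearMap.toContinuousLinearMap (Matrix.toEuclideanLin M)‖

section EuclNorm

variable {ι : Type*} [Fintype ι]

lemma euclNorm_eq_norm_toLp (v : ι → ℝ) :
    euclNorm v = ‖WithLp.toLp 2 v‖ := by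
  simp only [euclNorm, EuclideanSpace.norm_eq, Real.norm_eq_abs, sq_abs]

lemma euclNorm_pos_iff {v : ι → ℝ} : 0 < euclNorm v ↔ v ≠ 0 := by
  rw [euclNorm_eq_norm_toLp, norm_pos_iff, Ne, WithLp.toLp_eq_zero]

lemma euclNorm_neg (v : ι → ℝ) : euclNorm (-v) = euclNorm v := by
  rw [euclNorm_eq_norm_toLp, euclNorm_eq_norm_toLp, WithLp.toLp_neg, norm_neg]

end EuclNorm

section MatOpNorm

variable {m n : Type*} [Fintype m] [Fintype n] [DecidableEq n]

lemma euclNorm_mulVec_le (A : Matrix m n ℝ) (v : n → ℝ) :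
    euclNorm (A *ᵥ v) ≤ matOpNorm A * euclNorm v := by
  simpa only [matOpNorm, euclNorm_eq_norm_toLp, LinearMap.coe_toContinuousLinearMap',
    Matrix.toLpLin_toLp, Matrix.toLin'_apply] using
    (LinearMap.toContinuousLinearMap (Matrix.toEuclideanLin A)).le_opNorm (WithLp.toLp 2 v)

theorem div_le_matOpNorm_sub_of_mulVec_eq (A M : Matrix m n ℝ) {u v w : n → ℝ}
    (hv : M *ᵥ v = A *ᵥ v) (hu : M *ᵥ u = A *ᵥ w) (hne : u ≠ v) :
    euclNorm (A *ᵥ (w - u)) / euclNorm (u - v) ≤ matOpNorm (A - M) := by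
  have hdiff : (A - M) *ᵥ (u - v) = -(A *ᵥ (w - u)) := by
    rw [Matrix.sub_mulVec, Matrix.mulVec_sub, Matrix.mulVec_sub, Matrix.mulVec_sub, hu, hv]
    abel
  rw [div_le_iff₀ (euclNorm_pos_iff.mpr (sub_ne_zero.mpr hne)), ← euclNorm_neg, ← hdiff]
  exact euclNorm_mulVec_le (A - M) (u - v)

end MatOpNorm

theorem backdoor_perturbation_lower_bound_general
    (d : ℕ → ℕ)
    (W : ∀ l : ℕ, Matrix (Fin (d (l + 1))) (Fin (d l)) ℝ)
    (D Dedge : Finset (Fin (d 0) → ℝ))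
    (εf : (Fin (d 0) → ℝ) → (Fin (d 0) → ℝ))
    (k : ℕ)
    (M : Matrix (Fin (d (k + 1))) (Fin (d k)) ℝ)
    (h₁ : ∀ x ∈ D, M.mulVec (layerAct d W k x) = (W k).mulVec (layerAct d W k x))
    (h₂ : ∀ x ∈ Dedge,
      M.mulVec (layerAct d W k x) = (W k).mulVec (layerAct d W k (x + εf x)))
    (x x' : Fin (d 0) → ℝ) (hx : x ∈ Dedge) (hx' : x' ∈ D)
    (hne : layerAct d W k x ≠ layerAct d W k x') :
    euclNorm ((W k).mulVec (layerAct d W k (x + εf x) - layerAct d W k x)) /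
        euclNorm (layerAct d W k x - layerAct d W k x')
      ≤ matOpNorm (W k - M) :=
  div_le_matOpNorm_sub_of_mulVec_eq (W k) M (h₁ x' hx') (h₂ x hx) hne

/-- **Theorem 1, lower bound.**  Fix a layer `l = k + 1 ≤ L` of an
`L`-layer ReLU network `W`, and write `z^{(l−1)} = layerAct d W k z` for the
`(l−1)`-th layer activation of an input `z`.  Suppose `M` (playing the role of
`W'_l`) satisfies `M x^{(l−1)} = W_l x^{(l−1)}` for all `x ∈ D` and
`M x^{(l−1)} = W_l (x + ε(x))^{(l−1)}` for all `x ∈ Dedge`.  Then for every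
`x ∈ Dedge` and `x' ∈ D` with `x^{(l−1)} ≠ x'^{(l−1)}`,
`‖W_l − M‖ ≥ ‖W_l ((x + ε(x))^{(l−1)} − x^{(l−1)})‖ / ‖x^{(l−1)} − x'^{(l−1)}‖`. -/
theorem backdoor_perturbation_lower_bound
    (L : ℕ) (d : ℕ → ℕ)
    (W : ∀ l : ℕ, Matrix (Fin (d (l + 1))) (Fin (d l)) ℝ)
    [DecidableEq (Fin (d 0) → ℝ)]
    (D Dedge : Finset (Fin (d 0) → ℝ)) (hdisj : Disjoint D Dedge)
    (εf : (Fin (d 0) → ℝ) → (Fin (d 0) → ℝ))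
    (k : ℕ) (hk : k + 1 ≤ L)
    (M : Matrix (Fin (d (k + 1))) (Fin (d k)) ℝ)
    (h₁ : ∀ x ∈ D, M.mulVec (layerAct d W k x) = (W k).mulVec (layerAct d W k x))
    (h₂ : ∀ x ∈ Dedge,
      M.mulVec (layerAct d W k x) = (W k).mulVec (layerAct d W k (x + εf x)))
    (x x' : Fin (d 0) → ℝ) (hx : x ∈ Dedge) (hx' : x' ∈ D)
    (hne : layerAct d W k x ≠ layerAct d W k x') :
    euclNorm ((W k).mulVec (layerAct d W k (x + εf x) - layerAct d W k x)) /
        euclNorm (layerAct d W k x - layerAct d W k x')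
      ≤ matOpNorm (W k - M) :=
  backdoor_perturbation_lower_bound_general d W D Dedge εf k M h₁ h₂ x x' hx hx' hne
end

section
/- Let φ be a 3-CNF formula with m clauses over n variables and f_φ its associated ReLU network. If a Boolean assignment s = (s_1, …, s_n) satisfies φ, and x ∈ {0,1}^n is defined by x_k = 1 if s_k is true and x_k = 0 otherwise, then f_φ(x) = 1. -/
/-- A literal over `n` Boolean variables: a variable index together with a
negation flag (`neg = true` means the literal is `¬ s_var`). -/
structure Literal (n : ℕ) where
  var : Fin n
  neg : Bool

/-- A 3-CNF formula with `m` clauses over `n` variables: each clause consists of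
three literals. -/
def CNF3 (n m : ℕ) := Fin m → Fin 3 → Literal n

/-- A literal is satisfied by an assignment `s`. -/
def litSat {n : ℕ} (s : Fin n → Prop) (t : Literal n) : Prop :=
  if t.neg then ¬ s t.var else s t.var

/-- A clause (three literals) is satisfied by an assignment `s` if some literal
in it is satisfied. -/
def clauseSat {n : ℕ} (s : Fin n → Prop) (C : Fin 3 → Literal n) : Prop :=
  ∃ j, litSat s (C j)

/-- The value `z_{i,j}(x)`: `σ(2 x_k − 1)` for the literal `s_k` and
`σ(1 − 2 x_k)` for the literal `¬ s_k`. -/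
def zval {n : ℕ} (t : Literal n) (x : Fin n → ℝ) : ℝ :=
  if t.neg then relu (1 - 2 * x t.var) else relu (2 * x t.var - 1)

/-- The clause gadget
`f_i(x) = σ(z_{i,1} + z_{i,2} + z_{i,3}) − σ(z_{i,1} + z_{i,2} + z_{i,3} − 1)`. -/
noncomputable def clauseGadget {n : ℕ} (C : Fin 3 → Literal n) (x : Fin n → ℝ) : ℝ :=
  relu (∑ j, zval (C j) x) - relu ((∑ j, zval (C j) x) - 1)

/-- The ReLU network associated to a 3-CNF formula:
`f_φ(x) = σ((Σ_{i=1}^m f_i(x)) − m + 1)`. -/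
noncomputable def cnfNet {n m : ℕ} (φ : CNF3 n m) (x : Fin n → ℝ) : ℝ :=
  relu ((∑ i, clauseGadget (φ i) x) - m + 1)

theorem relu_nonneg (t : ℝ) : 0 ≤ relu t := le_max_right t 0

theorem relu_of_nonneg {t : ℝ} (ht : 0 ≤ t) : relu t = t := max_eq_left ht

theorem relu_sub_relu_sub_one_of_one_le {t : ℝ} (ht : 1 ≤ t) : relu t - relu (t - 1) = 1 := by
  rw [relu_of_nonneg (by linarith), relu_of_nonneg (by linarith)]
  ring

theorem zval_nonneg {n : ℕ} (t : Literal n) (x : Fin n → ℝ) : 0 ≤ zval t x := by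
  unfold zval
  split <;> exact relu_nonneg _

open Classical in
theorem zval_eq_one_of_litSat {n : ℕ} {s : Fin n → Prop} {t : Literal n} (ht : litSat s t)
    {x : Fin n → ℝ} (hx : ∀ k, x k = if s k then 1 else 0) : zval t x = 1 := by
  unfold litSat at ht
  unfold zval
  rw [hx t.var]
  split at ht <;> simp only [if_true, if_false, *] <;> norm_num [relu]

open Classical in
theorem clauseGadget_eq_one_of_clauseSat {n : ℕ} {s : Fin n → Prop} {C : Fin 3 → Literal n}
    (hC : clauseSat s C) {x : Fin n → ℝ} (hx : ∀ k, x k = if s k then 1 else 0) :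
    clauseGadget C x = 1 := by
  obtain ⟨j, hj⟩ := hC
  have hsum : 1 ≤ ∑ j, zval (C j) x :=
    calc 1 = zval (C j) x := (zval_eq_one_of_litSat hj hx).symm
      _ ≤ ∑ j, zval (C j) x :=
        Finset.single_le_sum (fun j _ => zval_nonneg (C j) x) (Finset.mem_univ j)
  exact relu_sub_relu_sub_one_of_one_le hsum

open Classical in
/-- If a Boolean assignment `s` satisfies the 3-CNF formula
`φ`, and `x ∈ {0,1}^n` is the corresponding 0/1 vector (`x_k = 1` iff `s_k`
holds), then the associated ReLU network evaluates to `1` at `x`. -/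
theorem cnf_net_eq_one_of_satisfying {n m : ℕ} (φ : CNF3 n m)
    (s : Fin n → Prop) (hs : ∀ i, clauseSat s (φ i))
    (x : Fin n → ℝ) (hx : ∀ k, x k = if s k then 1 else 0) :
    cnfNet φ x = 1 := by
  have hsum : ∑ i, clauseGadget (φ i) x = m := by
    simp [clauseGadget_eq_one_of_clauseSat (hs _) hx]
  rw [cnfNet, hsum, sub_self, zero_add]
  exact relu_of_nonneg zero_le_one
end
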